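/- Every cycle c off a vertex α on a finite digraph G admits a unique decomposition into a simple cycle off α (its base cycle) together with, for each internal vertex ηᵢ of the base cycle, a finite (possibly empty) ordered sequence of cycles off ηᵢ on the subgraph obtained from G by removing α and the earlier internal vertices, such that nesting these child cycles into the base cycle reproduces c. -/

import Mathlib

variable {V : Type*} [DecidableEq V]

/-- A cycle off `μ` on the digraph `G`: a nontrivial walk starting and ending
at `μ` that does not revisit `μ` internally (represented by its vertex string). -/
def IsCycleOff (G : V → V → Prop) (μ : V) (c : List V) : Prop :=
  c.Chain' G ∧ 2 ≤ c.length ∧ c.head? = some μ ∧ c.getLast? = some μ ∧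
    μ ∉ c.tail.dropLast

/-- A simple cycle off `α`: a cycle whose internal vertices are pairwise
distinct (equivalently, its vertex string with the final `α` removed has no
repetitions). -/
def IsSimpleCycleOff (G : V → V → Prop) (α : V) (s : List V) : Prop :=
  IsCycleOff G α s ∧ s.dropLast.Nodup

/-- The vertex string obtained by nesting the ordered sequence of cycles `cs`
(all closed walks off `μ`) one after another off the vertex `μ`. -/
def block (μ : V) (cs : List (List V)) : List V :=
  (cs.map List.dropLast).flatten ++ [μ]

/-- `CycDecomp G α c s cs` says: `s` is a simple cycle off `α` on `G` with
internal vertices `η₁, …, η_k` (the list `s.tail.dropLast`); for each `i`,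
`cs i` is a finite (possibly empty) ordered sequence of cycles off `ηᵢ` on the
subgraph of `G` obtained by removing `α` and the earlier internal vertices;
and nesting these child cycles into the base cycle `s` reproduces `c`. -/
def CycDecomp (G : V → V → Prop) (α : V) (c s : List V)
    (cs : List (List (List V))) : Prop :=
  IsSimpleCycleOff G α s ∧
  cs.length = s.tail.dropLast.length ∧
  (∀ i : Fin s.tail.dropLast.length, ∀ d ∈ cs.getD i [],
      IsCycleOff G (s.tail.dropLast.get i) d ∧
      ∀ v ∈ d, v ∉ α :: s.tail.dropLast.take i) ∧
  c = α :: ((List.ofFn fun i : Fin s.tail.dropLast.length =>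
      block (s.tail.dropLast.get i) (cs.getD i [])).flatten ++ [α])

/-!
Write `c = α :: (w ++ [α])` and let `η` be the first vertex of `w`. Cutting `w` just after the
last occurrence of `η` gives a prefix which, cut again at every occurrence of `η`, is a sequence of
cycles off `η`, and a suffix avoiding `α` and `η`, which is decomposed recursively in the graph
with `η` removed as well; the first vertices met along the way form the base cycle. Conversely, in
any decomposition the children of later vertices avoid `η`, so the block of `η` necessarily ends
at the last occurrence of `η`, which forces uniqueness.
-/

namespace List

variable {α : Type*}

theorem append_inj_of_notMem_of_head? {a : α} {u u' r r' : List α}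
    (hu : a ∉ u) (hu' : a ∉ u') (hr : ∀ b ∈ r.head?, b = a) (hr' : ∀ b ∈ r'.head?, b = a)
    (h : u ++ r = u' ++ r') : u = u' ∧ r = r' := by
  classical
  have takeWhile_eq : ∀ {u r : List α}, a ∉ u → (∀ b ∈ r.head?, b = a) →
      (u ++ r).takeWhile (· ≠ a) = u := by
    intro u r hu hr
    rw [takeWhile_append_of_pos (by simpa using fun b hb (h : b = a) => hu (h ▸ hb))]
    cases r with
    | nil => simp
    | cons b r => simp [hr b rfl]
  obtain rfl : u = u' := by rw [← takeWhile_eq hu hr, h, takeWhile_eq hu' hr']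
  exact ⟨rfl, append_cancel_left h⟩

theorem exists_eq_append_cons_notMem_right {a : α} {l : List α} (h : a ∈ l) :
    ∃ s t, l = s ++ a :: t ∧ a ∉ t := by
  obtain ⟨t, s, hl, ht⟩ := eq_append_cons_of_mem (mem_reverse.2 h)
  refine ⟨s.reverse, t.reverse, ?_, by simpa using ht⟩
  simpa using congrArg reverse hl

theorem append_cons_inj_of_notMem_right {a : α} {s s' t t' : List α}
    (ht : a ∉ t) (ht' : a ∉ t') (h : s ++ a :: t = s' ++ a :: t') : s = s' ∧ t = t' := by
  have hrev := congrArg reverse h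
  simp only [reverse_append, reverse_cons, append_assoc, singleton_append] at hrev
  obtain ⟨htt, hss⟩ := append_inj_of_notMem_of_head? (by simpa using ht) (by simpa using ht')
    (by simp) (by simp) hrev
  exact ⟨by simpa using hss, by simpa using htt⟩

theorem ofFn_get_getD_eq_zipWith {β γ : Type*} (f : α → β → γ) {l : List α} {l' : List β}
    (d : β) (h : l.length ≤ l'.length) :
    ofFn (fun i : Fin l.length => f (l.get i) (l'.getD i d)) = zipWith f l l' := by
  apply ext_getElem <;> simp only [length_ofFn, length_zipWith, List.getElem_ofFn, get_eq_getElem,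
    getD_eq_getElem?_getD, getElem_zipWith]
  · omega
  · intro i hi _
    rw [getElem?_eq_getElem (by omega), Option.getD_some]

end List

section Nesting

variable {V : Type*} {G : V → V → Prop} {μ : V}

theorem isCycleOff_iff {d : List V} :
    IsCycleOff G μ d ↔ d.IsChain G ∧ ∃ u, μ ∉ u ∧ d = μ :: (u ++ [μ]) := by
  constructor
  · rintro ⟨hchain, hlen, hhead, hlast, hint⟩
    refine ⟨hchain, d.tail.dropLast, hint, ?_⟩
    obtain ⟨_ | ⟨b, t⟩, rfl⟩ : ∃ t, d = μ :: t := by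
      cases d <;> simp_all
    · simp at hlen
    · rw [List.getLast?_cons_cons] at hlast
      simpa using (List.dropLast_append_getLast? _ hlast).symm
  · rintro ⟨hchain, u, hu, rfl⟩
    exact ⟨hchain, by simp, rfl, by rw [← List.cons_append, List.getLast?_concat],
      by simpa using hu⟩

@[simp]
theorem block_nil : block μ [] = [μ] := rfl

@[simp]
theorem block_cons_cycle (u : List V) (ds : List (List V)) :
    block μ ((μ :: (u ++ [μ])) :: ds) = μ :: (u ++ block μ ds) := by
  rw [block, List.map_cons, List.flatten_cons, ← List.cons_append, List.dropLast_concat]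
  simp [block]

@[simp]
theorem block_ne_nil (ds : List (List V)) : block μ ds ≠ [] := by
  simp [block]

theorem head?_block {ds : List (List V)} (hds : ∀ d ∈ ds, IsCycleOff G μ d) :
    (block μ ds).head? = some μ := by
  cases ds with
  | nil => rfl
  | cons d ds =>
    obtain ⟨-, u, -, rfl⟩ := isCycleOff_iff.1 (hds d List.mem_cons_self)
    simp

theorem mem_block_of_mem_cycle {ds : List (List V)} {d : List V} {v : V}
    (hd : d ∈ ds) (hcyc : IsCycleOff G μ d) (hv : v ∈ d) : v ∈ block μ ds := by
  obtain ⟨-, u, -, rfl⟩ := isCycleOff_iff.1 hcyc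
  simp only [block, List.mem_append, List.mem_flatten, List.mem_map, List.mem_singleton]
  rw [← List.cons_append, List.mem_append, List.mem_singleton] at hv
  rcases hv with hv | rfl
  · exact Or.inl ⟨_, ⟨_, hd, rfl⟩, by rwa [← List.cons_append, List.dropLast_concat]⟩
  · exact Or.inr rfl

theorem eq_of_block_eq {ds ds' : List (List V)} (hds : ∀ d ∈ ds, IsCycleOff G μ d)
    (hds' : ∀ d ∈ ds', IsCycleOff G μ d) (h : block μ ds = block μ ds') : ds = ds' := by
  induction ds generalizing ds' with
  | nil =>
    rcases ds' with _ | ⟨d', ds'⟩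
    · rfl
    obtain ⟨-, u', -, rfl⟩ := isCycleOff_iff.1 (hds' d' List.mem_cons_self)
    simp at h
  | cons d ds ih =>
    obtain ⟨-, u, hu, rfl⟩ := isCycleOff_iff.1 (hds _ List.mem_cons_self)
    rcases ds' with _ | ⟨d', ds'⟩
    · simp at h
    obtain ⟨-, u', hu', rfl⟩ := isCycleOff_iff.1 (hds' _ List.mem_cons_self)
    have htail := fun d hd => hds d (List.mem_cons_of_mem _ hd)
    have htail' := fun d hd => hds' d (List.mem_cons_of_mem _ hd)
    simp only [block_cons_cycle, List.cons.injEq, true_and] at h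
    obtain ⟨rfl, hrest⟩ := List.append_inj_of_notMem_of_head? hu hu'
      (by simp [head?_block htail]) (by simp [head?_block htail']) h
    rw [ih htail htail' hrest]

theorem exists_block_eq_cons {u : List V} (x : List V) (hu : μ ∉ u)
    (hchain : (μ :: (u ++ x ++ [μ])).IsChain G) :
    ∃ ds, (∀ d ∈ ds, IsCycleOff G μ d) ∧ block μ ds = μ :: (u ++ x ++ [μ]) := by
  induction x generalizing u with
  | nil =>
    refine ⟨[μ :: (u ++ [μ])], ?_, by simp⟩
    simpa [isCycleOff_iff] using ⟨by simpa using hchain, hu⟩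
  | cons v x ih =>
    by_cases hv : v = μ
    · subst hv
      obtain ⟨hcycle, hrest⟩ := List.isChain_cons_split.1 (by simpa using hchain)
      obtain ⟨ds, hds, hblock⟩ := ih (u := []) List.not_mem_nil (by simpa using hrest)
      refine ⟨(v :: (u ++ [v])) :: ds, ?_, by simp [hblock]⟩
      rintro d (_ | ⟨_, hd⟩)
      · exact isCycleOff_iff.2 ⟨hcycle, u, hu, rfl⟩
      · exact hds d hd
    · simpa using ih (u := u ++ [v]) (by simp [hu, Ne.symm hv]) (by simpa using hchain)

theorem exists_block_eq {x : List V} (hchain : (x ++ [μ]).IsChain G)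
    (hx : ∀ a ∈ x.head?, a = μ) :
    ∃ ds, (∀ d ∈ ds, IsCycleOff G μ d) ∧ block μ ds = x ++ [μ] := by
  rcases x with _ | ⟨a, x⟩
  · exact ⟨[], by simp, rfl⟩
  obtain rfl : a = μ := hx a rfl
  simpa using exists_block_eq_cons (u := []) x List.not_mem_nil (by simpa using hchain)

def blocks (ηs : List V) (cs : List (List (List V))) : List V :=
  (List.zipWith block ηs cs).flatten

@[simp]
theorem blocks_nil (cs : List (List (List V))) : blocks [] cs = [] := rfl

@[simp]
theorem blocks_cons_cons (η : V) (ηs : List V) (e : List (List V)) (cs : List (List (List V))) :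
    blocks (η :: ηs) (e :: cs) = block η e ++ blocks ηs cs := rfl

inductive ChildCycles (G : V → V → Prop) : List V → List V → List (List (List V)) → Prop
  | nil (F : List V) : ChildCycles G F [] []
  | cons {F : List V} {η : V} {ηs : List V} {e : List (List V)} {cs : List (List (List V))} :
      η ∉ F → (∀ d ∈ e, IsCycleOff G η d ∧ ∀ v ∈ d, v ∉ F) →
      ChildCycles G (F ++ [η]) ηs cs → ChildCycles G F (η :: ηs) (e :: cs)

theorem childCycles_cons_iff {F : List V} {η : V} {ηs : List V} {e : List (List V)}
    {cs : List (List (List V))} :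
    ChildCycles G F (η :: ηs) (e :: cs) ↔
      η ∉ F ∧ (∀ d ∈ e, IsCycleOff G η d ∧ ∀ v ∈ d, v ∉ F) ∧ ChildCycles G (F ++ [η]) ηs cs :=
  ⟨fun | .cons hη he h => ⟨hη, he, h⟩, fun ⟨hη, he, h⟩ => .cons hη he h⟩

theorem childCycles_iff {F ηs : List V} {cs : List (List (List V))} :
    ChildCycles G F ηs cs ↔
      cs.length = ηs.length ∧ (∀ v ∈ ηs, v ∉ F) ∧ ηs.Nodup ∧
        ∀ i : Fin ηs.length, ∀ d ∈ cs.getD i [],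
          IsCycleOff G (ηs.get i) d ∧ ∀ v ∈ d, v ∉ F ++ ηs.take i := by
  induction ηs generalizing F cs with
  | nil =>
    rcases cs with _ | ⟨e, cs⟩
    · simpa using ChildCycles.nil F
    · simp only [List.length_cons, List.length_nil, Nat.add_one_ne_zero, false_and, iff_false]
      rintro ⟨⟩
  | cons η ηs ih =>
    rcases cs with _ | ⟨e, cs⟩
    · simp only [List.length_nil, List.length_cons, Nat.zero_ne_add_one, false_and, iff_false]
      rintro ⟨⟩
    have hne : (∀ v ∈ ηs, v ≠ η) ↔ η ∉ ηs :=
      ⟨fun h hη => h η hη rfl, fun h v hv hvη => h (hvη ▸ hv)⟩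
    rw [childCycles_cons_iff, ih]
    simp only [List.length_cons, Fin.forall_fin_succ]
    simp [forall_and, hne]
    tauto

namespace ChildCycles

variable {F : List V} {ηs : List V} {cs : List (List (List V))}

theorem notMem_blocks (h : ChildCycles G F ηs cs) {v : V} (hv : v ∈ F) : v ∉ blocks ηs cs := by
  induction h with
  | nil => simp
  | @cons F η _ e _ hη he _ ih =>
    simp only [blocks_cons_cons, block, List.mem_append, List.mem_flatten, List.mem_map,
      List.mem_singleton, not_or]
    refine ⟨⟨?_, fun hvη => hη (hvη ▸ hv)⟩, ih (List.mem_append_left _ hv)⟩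
    rintro ⟨_, ⟨d, hd, rfl⟩, hvd⟩
    exact (he d hd).2 v (List.dropLast_subset d hvd) hv

theorem eq_of_blocks_eq {F' ηs' : List V} {cs' : List (List (List V))}
    (h : ChildCycles G F ηs cs) (h' : ChildCycles G F' ηs' cs')
    (heq : blocks ηs cs = blocks ηs' cs') : ηs = ηs' ∧ cs = cs' := by
  induction h generalizing F' ηs' cs' with
  | nil => cases h' with
    | nil => exact ⟨rfl, rfl⟩
    | cons => simp at heq
  | @cons F η ηs e cs hη he ht ih =>
    cases h' with
    | nil => simp at heq
    | @cons _ η' ηs' e' cs' hη' he' ht' =>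
      obtain rfl : η = η' := by
        simpa [List.head?_append, head?_block fun d hd => (he d hd).1,
          head?_block fun d hd => (he' d hd).1] using congrArg List.head? heq
      -- the block of `η` ends at the last occurrence of `η`
      simp only [blocks_cons_cons, block, List.append_assoc, List.singleton_append] at heq
      obtain ⟨hx, hrest⟩ := List.append_cons_inj_of_notMem_right
        (ht.notMem_blocks (by simp)) (ht'.notMem_blocks (by simp)) heq
      obtain rfl : e = e' :=
        eq_of_block_eq (fun d hd => (he d hd).1) (fun d hd => (he' d hd).1) (by simp [block, hx])
      obtain ⟨rfl, rfl⟩ := ih ht' hrest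
      exact ⟨rfl, rfl⟩

end ChildCycles

theorem exists_childCycles {γ β : V} {F : List V} (w : List V) (hw : ∀ v ∈ w, v ∉ F)
    (hchain : (γ :: (w ++ [β])).IsChain G) :
    ∃ ηs cs, ChildCycles G F ηs cs ∧ (γ :: (ηs ++ [β])).IsChain G ∧ blocks ηs cs = w := by
  induction hn : w.length using Nat.strong_induction_on generalizing γ F w with | _ n ih =>
  rcases w with _ | ⟨η, t⟩
  · exact ⟨[], [], .nil F, hchain, rfl⟩
  have hγη : G γ η := (List.isChain_cons_cons.1 hchain).1
  obtain ⟨x, y, hxy, hy⟩ := List.exists_eq_append_cons_notMem_right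
    (List.mem_cons_self : η ∈ η :: t)
  have hx : ∀ a ∈ x.head?, a = η := by
    rcases x with _ | ⟨a, x⟩
    · simp
    · simp_all
  rw [hxy, List.append_assoc, List.cons_append] at hchain
  obtain ⟨hchain_x, hchain_y⟩ := List.isChain_cons_split.1 hchain
  obtain ⟨ηs, cs, hcc, hchain_ηs, rfl⟩ := ih y.length (by simp [← hn, hxy]; omega) (F := F ++ [η]) y
    (fun v hv => by simpa [not_or] using ⟨hw v (hxy ▸ by simp [hv]), fun h => hy (h ▸ hv)⟩)
    hchain_y rfl
  obtain ⟨e, he, hblock⟩ := exists_block_eq hchain_x.tail hx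
  refine ⟨η :: ηs, e :: cs, .cons (hw η List.mem_cons_self) ?_ hcc,
    List.isChain_cons_cons.2 ⟨hγη, hchain_ηs⟩, by simp [hblock, hxy]⟩
  intro d hd
  refine ⟨he d hd, fun v hv => hw v ?_⟩
  have hv := mem_block_of_mem_cycle hd (he d hd) hv
  rw [hblock, List.mem_append, List.mem_singleton] at hv
  rw [hxy, List.mem_append, List.mem_cons]
  tauto

theorem cycDecomp_iff {α : V} {c s : List V} {cs : List (List (List V))} :
    CycDecomp G α c s cs ↔ ∃ ηs, s = α :: (ηs ++ [α]) ∧ s.IsChain G ∧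
      ChildCycles G [α] ηs cs ∧ c = α :: (blocks ηs cs ++ [α]) := by
  have internal : ∀ ηs : List V, (α :: (ηs ++ [α])).tail.dropLast = ηs := by simp
  have nodup_iff : ∀ ηs : List V, (α :: (ηs ++ [α])).dropLast.Nodup ↔ α ∉ ηs ∧ ηs.Nodup := by
    intro ηs
    rw [← List.cons_append, List.dropLast_concat, List.nodup_cons]
  constructor
  · rintro ⟨⟨hcyc, hnodup⟩, hlen, hchild, rfl⟩
    obtain ⟨hchain, ηs, -, rfl⟩ := isCycleOff_iff.1 hcyc
    rw [internal] at hlen hchild ⊢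
    rw [nodup_iff] at hnodup
    refine ⟨ηs, rfl, hchain, childCycles_iff.2 ⟨hlen, ?_, hnodup.2, hchild⟩, ?_⟩
    · simpa using fun v hv (h : v = α) => hnodup.1 (h ▸ hv)
    · rw [List.ofFn_get_getD_eq_zipWith block [] hlen.ge, blocks]
  · rintro ⟨ηs, rfl, hchain, hcc, rfl⟩
    obtain ⟨hlen, hF, hnodup, hchild⟩ := childCycles_iff.1 hcc
    have hα : α ∉ ηs := fun h => hF α h (List.mem_singleton_self α)
    refine ⟨⟨isCycleOff_iff.2 ⟨hchain, ηs, hα, rfl⟩, (nodup_iff ηs).2 ⟨hα, hnodup⟩⟩, ?_⟩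
    rw [internal, List.ofFn_get_getD_eq_zipWith block [] hlen.ge]
    exact ⟨hlen, hchild, rfl⟩

end Nesting

theorem cycle_prime_factorisation_general (G : V → V → Prop) (α : V)
    (c : List V) (hc : IsCycleOff G α c) :
    ∃! scs : List V × List (List (List V)), CycDecomp G α c scs.1 scs.2 := by
  obtain ⟨hchain, w, hw, rfl⟩ := isCycleOff_iff.1 hc
  obtain ⟨ηs, cs, hcc, hchain_ηs, rfl⟩ :=
    exists_childCycles (F := [α]) w (by simpa using fun v hv (h : v = α) => hw (h ▸ hv)) hchain
  refine ⟨(α :: (ηs ++ [α]), cs), cycDecomp_iff.2 ⟨ηs, rfl, hchain_ηs, hcc, rfl⟩, ?_⟩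
  rintro ⟨s, cs'⟩ hdecomp
  obtain ⟨ηs', rfl, -, hcc', hc'⟩ := cycDecomp_iff.1 hdecomp
  obtain ⟨rfl, rfl⟩ := hcc'.eq_of_blocks_eq hcc (by simpa using hc'.symm)
  rfl

/-- **prime factorisation of cycles.** Every cycle `c` off a
vertex `α` on a finite digraph `G` admits a unique decomposition into a simple
cycle off `α` (its base cycle) together with, for each internal vertex of the
base cycle, a finite (possibly empty) ordered sequence of cycles off that
vertex on the subgraph obtained by removing `α` and the earlier internal
vertices, such that nesting these child cycles into the base cycle
reproduces `c`. -/
theorem cycle_prime_factorisation [Fintype V] (G : V → V → Prop) (α : V)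
    (c : List V) (hc : IsCycleOff G α c) :
    ∃! scs : List V × List (List (List V)), CycDecomp G α c scs.1 scs.2 :=
  cycle_prime_factorisation_general G α c hc
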